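/- arXiv:2402.05887 — 3 statements merged into one kernel-verified Lean document; each statement's English description precedes it below -/
import Mathlib

section
/- Exact optimal sandwich (ideal pre- and post-processors). Let K be a finite nonempty type, let α* : ℝⁿ → K and β* : K → ℝⁿ be the encoder and decoder of an arbitrary codec, let α : ℝᵐ → K be a regular encoder (every fiber {y ∈ ℝᵐ : α(y) = k} has nonempty interior), let β : K → ℝᵐ be an injective decoder, and let π : K ≃ K be a permutation. Then there exist functions f : ℝⁿ → ℝᵐ (pre-processor) and g : ℝᵐ → ℝⁿ (post-processor) such that for every x ∈ ℝⁿ: α(f(x)) = π(α*(x)) and g(β(α(f(x)))) = β*(α*(x)). Consequently, for every ℝⁿ-valued random vector X with α* ∘ X measurable and every measurable distortion measure d : ℝⁿ × ℝⁿ → [0,∞), the sandwiched codec has exactly the same expected distortion, E[d(X, g(β(α(f(X)))))] = E[d(X, β*(α*(X)))], and for every codelength function L : K → ℕ its expected rate satisfies E[L(α(f(X)))] = ∑_{k∈K} P(α*(X)=k) · L(π(k)). -/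
open MeasureTheory ENNReal

/-!
Since every fiber of `α` is nonempty, `α` has a right inverse `s`, and the pre-processor
`x ↦ s (π (αstar x))` makes `α` emit exactly the relabelled index `π (αstar x)`. Since `β` is
injective, the post-processor can read the index back off `β` and return `βstar (π⁻¹ k)`.
The sandwiched codec then reproduces the reconstruction of `(αstar, βstar)` pointwise, so the
distortions agree, and the rate is an integral of a function of `αstar ∘ X`, i.e. a finite sum
over its fibers.
-/

theorem surjective_of_forall_interior_fiber_nonempty {Y K : Type*} [TopologicalSpace Y]
    {α : Y → K} (hreg : ∀ k : K, (interior {y : Y | α y = k}).Nonempty) :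
    Function.Surjective α := fun k =>
  (hreg k).mono interior_subset

theorem exists_sandwich_processors {X X' Y K : Type*} [Nonempty X']
    (αstar : X → K) (βstar : K → X') {α : Y → K} (hα : Function.Surjective α)
    {β : K → Y} (hβ : Function.Injective β) (π : Equiv.Perm K) :
    ∃ f : X → Y, ∃ g : Y → X',
      (∀ x, α (f x) = π (αstar x)) ∧ ∀ x, g (β (α (f x))) = βstar (αstar x) := by
  have hf : ∀ x, α (Function.surjInv hα (π (αstar x))) = π (αstar x) := fun x =>
    Function.rightInverse_surjInv hα _
  refine ⟨fun x => Function.surjInv hα (π (αstar x)),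
    Function.extend β (βstar ∘ π.symm) fun _ => Classical.ofNonempty, hf, fun x => ?_⟩
  rw [hf, hβ.extend_apply]
  simp

theorem lintegral_comp_eq_sum_measure_fiber {Ω K : Type*} [MeasurableSpace Ω] [Fintype K]
    (μ : Measure Ω) {Y : Ω → K} (hY : ∀ k, MeasurableSet {ω | Y ω = k}) (c : K → ℝ≥0∞) :
    ∫⁻ ω, c (Y ω) ∂μ = ∑ k, μ {ω | Y ω = k} * c k := by
  have hsum : ∀ ω, c (Y ω) = ∑ k, {ω | Y ω = k}.indicator (fun _ => c k) ω := by
    classical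
    intro ω
    simp [Set.indicator_apply]
  simp_rw [hsum]
  rw [lintegral_finsetSum _ fun k _ => measurable_const.indicator (hY k)]
  simp_rw [lintegral_indicator_const (hY _), mul_comm]

theorem exact_optimal_sandwich_general {n m : ℕ} {K : Type*} [Fintype K]
    (αstar : (Fin n → ℝ) → K) (βstar : K → (Fin n → ℝ))
    (α : (Fin m → ℝ) → K) (hreg : ∀ k : K, (interior {y : Fin m → ℝ | α y = k}).Nonempty)
    (β : K → (Fin m → ℝ)) (hβ : Function.Injective β)
    (π : Equiv.Perm K) :
    ∃ f : (Fin n → ℝ) → (Fin m → ℝ), ∃ g : (Fin m → ℝ) → (Fin n → ℝ),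
      (∀ x, α (f x) = π (αstar x)) ∧
      (∀ x, g (β (α (f x))) = βstar (αstar x)) ∧
      (∀ (Ω : Type) (_ : MeasurableSpace Ω) (P : Measure Ω), IsProbabilityMeasure P →
        ∀ X : Ω → (Fin n → ℝ), (∀ k : K, MeasurableSet {ω | αstar (X ω) = k}) →
          ((∀ d : (Fin n → ℝ) × (Fin n → ℝ) → ℝ≥0∞, Measurable d →
              ∫⁻ ω, d (X ω, g (β (α (f (X ω))))) ∂P
                = ∫⁻ ω, d (X ω, βstar (αstar (X ω))) ∂P) ∧
           (∀ L : K → ℕ,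
              ∫⁻ ω, (L (α (f (X ω))) : ℝ≥0∞) ∂P
                = ∑ k : K, P {ω | αstar (X ω) = k} * (L (π k) : ℝ≥0∞)))) := by
  obtain ⟨f, g, hf, hg⟩ := exists_sandwich_processors αstar βstar
    (surjective_of_forall_interior_fiber_nonempty hreg) hβ π
  refine ⟨f, g, hf, hg, fun Ω _ P _ X hX => ⟨fun d _ => by simp_rw [hg], fun L => ?_⟩⟩
  simp_rw [hf]
  exact lintegral_comp_eq_sum_measure_fiber P hX fun k => (L (π k) : ℝ≥0∞)

/-- **Exact optimal sandwich (ideal pre- and post-processors).**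
Given an arbitrary codec `(αstar, βstar)` for `ℝⁿ` with finite nonempty index set `K`,
a regular encoder `α : ℝᵐ → K` (every fiber has nonempty interior), an injective decoder
`β : K → ℝᵐ`, and a permutation `π` of `K`, there exist a pre-processor `f` and a
post-processor `g` such that `α (f x) = π (αstar x)` and `g (β (α (f x))) = βstar (αstar x)`
for every `x`.  Consequently, for every random vector `X` with `αstar ∘ X` measurable and
every measurable distortion measure `d`, the sandwiched codec has exactly the same expected
distortion, and for every codelength function `L` its expected rate equals
`∑ k, P(αstar (X) = k) * L (π k)`. -/
theorem exact_optimal_sandwich {n m : ℕ} {K : Type*} [Fintype K] [Nonempty K]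
    (αstar : (Fin n → ℝ) → K) (βstar : K → (Fin n → ℝ))
    (α : (Fin m → ℝ) → K) (hreg : ∀ k : K, (interior {y : Fin m → ℝ | α y = k}).Nonempty)
    (β : K → (Fin m → ℝ)) (hβ : Function.Injective β)
    (π : Equiv.Perm K) :
    ∃ f : (Fin n → ℝ) → (Fin m → ℝ), ∃ g : (Fin m → ℝ) → (Fin n → ℝ),
      (∀ x, α (f x) = π (αstar x)) ∧
      (∀ x, g (β (α (f x))) = βstar (αstar x)) ∧
      (∀ (Ω : Type) (_ : MeasurableSpace Ω) (P : Measure Ω), IsProbabilityMeasure P →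
        ∀ X : Ω → (Fin n → ℝ), (∀ k : K, MeasurableSet {ω | αstar (X ω) = k}) →
          ((∀ d : (Fin n → ℝ) × (Fin n → ℝ) → ℝ≥0∞, Measurable d →
              ∫⁻ ω, d (X ω, g (β (α (f (X ω))))) ∂P
                = ∫⁻ ω, d (X ω, βstar (αstar (X ω))) ∂P) ∧
           (∀ L : K → ℕ,
              ∫⁻ ω, (L (α (f (X ω))) : ℝ≥0∞) ∂P
                = ∑ k : K, P {ω | αstar (X ω) = k} * (L (π k) : ℝ≥0∞)))) :=
  exact_optimal_sandwich_general αstar βstar α hreg β hβ π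
end

section
/- Existence of a continuous pre-processor achieving the prescribed encoding with high probability. Let μ be a Borel probability measure on ℝⁿ, let K be a finite nonempty type, let α* : ℝⁿ → K be Borel measurable, let α : ℝᵐ → K be a regular encoder (every fiber {y ∈ ℝᵐ : α(y) = k} has nonempty interior), and let π : K ≃ K be a permutation. Then for every δ > 0 there exists a continuous function f : ℝⁿ → ℝᵐ such that μ({x ∈ ℝⁿ : α(f(x)) = π(α*(x))}) ≥ 1 − δ. -/
/-! Approximate each cell `{x | π (αstar x) = k}` of the measurable partition from inside by a
closed set `F k`, losing total mass at most `δ`. The sets `F k` are disjoint and closed, so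
Urysohn bumps glue the constants `y k`, with `y k` a point of the fiber `α = k`, into a continuous
map; it encodes correctly on `⋃ k, F k`. -/

open MeasureTheory ENNReal Set Function

theorem MeasureTheory.exists_isClosed_subset_fiber_measure_compl_iUnion_le
    {X ι : Type*} [TopologicalSpace X] [MeasurableSpace X] [OpensMeasurableSpace X] [Countable ι]
    (μ : Measure X) [IsFiniteMeasure μ] [μ.WeaklyRegular]
    (g : X → ι) (hg : ∀ i, MeasurableSet (g ⁻¹' {i})) {ε : ℝ≥0∞} (hε : ε ≠ 0) :
    ∃ F : ι → Set X, (∀ i, IsClosed (F i)) ∧ (∀ i, F i ⊆ g ⁻¹' {i}) ∧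
      μ (⋃ i, F i)ᶜ ≤ ε := by
  obtain ⟨ε', hε'0, hε'ε⟩ := ENNReal.exists_pos_sum_of_countable' hε ι
  choose F hFg hFc hμF using fun i =>
    (hg i).exists_isClosed_sdiff_lt (measure_ne_top μ _) (hε'0 i).ne'
  refine ⟨F, hFc, hFg, ?_⟩
  have hcover : (⋃ i, F i)ᶜ ⊆ ⋃ i, g ⁻¹' {i} \ F i := fun x hx =>
    mem_iUnion.2 ⟨g x, rfl, fun hxF => hx (mem_iUnion.2 ⟨g x, hxF⟩)⟩
  calc μ (⋃ i, F i)ᶜ ≤ ∑' i, μ (g ⁻¹' {i} \ F i) :=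
        (measure_mono hcover).trans (measure_iUnion_le _)
    _ ≤ ∑' i, ε' i := ENNReal.tsum_le_tsum fun i => (hμF i).le
    _ ≤ ε := hε'ε.le

section Urysohn

variable {X ι : Type*} [TopologicalSpace X] [NormalSpace X] [Finite ι] {F : ι → Set X}

theorem exists_continuous_eqOn_one_eqOn_zero_of_pairwise_disjoint
    (hFc : ∀ i, IsClosed (F i)) (hF : Pairwise (Disjoint on F)) (i : ι) :
    ∃ u : C(X, ℝ), EqOn u 1 (F i) ∧ ∀ j ≠ i, EqOn u 0 (F j) := by
  have hrest : IsClosed (⋃ j ∈ ({i}ᶜ : Set ι), F j) :=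
    (toFinite _).isClosed_biUnion fun j _ => hFc j
  have hdisj : Disjoint (⋃ j ∈ ({i}ᶜ : Set ι), F j) (F i) :=
    disjoint_iUnion₂_left.2 fun j hj => hF hj
  obtain ⟨u, hu0, hu1, -⟩ := exists_continuous_zero_one_of_isClosed hrest (hFc i) hdisj
  exact ⟨u, hu1, fun j hj => hu0.mono (subset_biUnion_of_mem (u := F) hj)⟩

theorem exists_continuous_eq_const_on_pairwise_disjoint {E : Type*} [TopologicalSpace E]
    [AddCommMonoid E] [Module ℝ E] [ContinuousAdd E] [ContinuousSMul ℝ E]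
    (hFc : ∀ i, IsClosed (F i)) (hF : Pairwise (Disjoint on F)) (y : ι → E) :
    ∃ f : C(X, E), ∀ i, ∀ x ∈ F i, f x = y i := by
  cases nonempty_fintype ι
  choose u hu1 hu0 using exists_continuous_eqOn_one_eqOn_zero_of_pairwise_disjoint hFc hF
  refine ⟨⟨fun x => ∑ j, u j x • y j, by fun_prop⟩, fun i x hx => ?_⟩
  rw [ContinuousMap.coe_mk, Finset.sum_eq_single i (fun j _ hji => by simp [hu0 j i hji.symm hx])
    (by simp), hu1 i hx, Pi.one_apply, one_smul]

end Urysohn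

theorem continuous_preprocessor_exists_general {n m : ℕ} {K : Type*} [Fintype K]
    (μ : Measure (Fin n → ℝ)) [IsProbabilityMeasure μ]
    (αstar : (Fin n → ℝ) → K)
    (hαstar : ∀ k : K, MeasurableSet {x : Fin n → ℝ | αstar x = k})
    (α : (Fin m → ℝ) → K)
    (hreg : ∀ k : K, (interior {y : Fin m → ℝ | α y = k}).Nonempty)
    (π : Equiv.Perm K) :
    ∀ δ : ℝ, 0 < δ →
      ∃ f : (Fin n → ℝ) → (Fin m → ℝ), Continuous f ∧
        1 - ENNReal.ofReal δ ≤ μ {x : Fin n → ℝ | α (f x) = π (αstar x)} := by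
  intro δ hδ
  choose y hy using fun k => (hreg k).mono interior_subset
  have hfiber (k : K) : MeasurableSet ((π ∘ αstar) ⁻¹' {k}) := by
    convert hαstar (π.symm k) using 1
    ext x
    simp [Equiv.eq_symm_apply]
  obtain ⟨F, hFc, hFfiber, hμF⟩ := exists_isClosed_subset_fiber_measure_compl_iUnion_le μ
    (π ∘ αstar) hfiber (ENNReal.ofReal_pos.2 hδ).ne'
  obtain ⟨f, hf⟩ := exists_continuous_eq_const_on_pairwise_disjoint hFc
    (fun i j hij => (pairwise_disjoint_fiber _ hij).mono (hFfiber i) (hFfiber j)) y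
  have hgood : ⋃ k, F k ⊆ {x | α (f x) = π (αstar x)} := iUnion_subset fun k x hx => by
    change α (f x) = π (αstar x)
    rw [hf k x hx, hy k]
    exact (hFfiber k hx).symm
  refine ⟨f, f.continuous, tsub_le_iff_right.2 ?_⟩
  calc 1 = μ univ := measure_univ.symm
    _ ≤ μ (⋃ k, F k) + μ (⋃ k, F k)ᶜ := measure_univ_le_add_compl _
    _ ≤ μ {x | α (f x) = π (αstar x)} + ENNReal.ofReal δ :=
        add_le_add (measure_mono hgood) hμF

/-- **Existence of a continuous pre-processor achieving the prescribed encoding with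
high probability.**  Let `μ` be a Borel probability measure on `ℝⁿ`, `αstar : ℝⁿ → K` a
Borel-measurable encoder into a finite nonempty index set, `α : ℝᵐ → K` a regular encoder
(every fiber has nonempty interior), and `π : K ≃ K` a permutation.  Then for every
`δ > 0` there is a continuous `f : ℝⁿ → ℝᵐ` with
`μ {x | α (f x) = π (αstar x)} ≥ 1 - δ`. -/
theorem continuous_preprocessor_exists {n m : ℕ} {K : Type*} [Fintype K] [Nonempty K]
    (μ : Measure (Fin n → ℝ)) [IsProbabilityMeasure μ]
    (αstar : (Fin n → ℝ) → K)
    (hαstar : ∀ k : K, MeasurableSet {x : Fin n → ℝ | αstar x = k})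
    (α : (Fin m → ℝ) → K)
    (hreg : ∀ k : K, (interior {y : Fin m → ℝ | α y = k}).Nonempty)
    (π : Equiv.Perm K) :
    ∀ δ : ℝ, 0 < δ →
      ∃ f : (Fin n → ℝ) → (Fin m → ℝ), Continuous f ∧
        1 - ENNReal.ofReal δ ≤ μ {x : Fin n → ℝ | α (f x) = π (αstar x)} :=
  continuous_preprocessor_exists_general μ αstar hαstar α hreg π
end

section
/- Monotone nonincrease of the Lagrangian in one iteration of the Codelength Constrained Vector Quantization algorithm. Let K be a finite nonempty type, let X be a random vector in ℝⁿ, let d : ℝⁿ × ℝⁿ → [0,∞) be measurable in its first argument for each fixed second argument, and let λ ≥ 0. Let (α₀, β₀, L₀) be the current measurable encoder, decoder, and codelength function. Suppose: (i) the measurable encoder α₁ : ℝⁿ → K is pointwise Lagrangian-optimal for (β₀, L₀), i.e., for every x and k, d(x, β₀(α₁(x))) + λ·L₀(α₁(x)) ≤ d(x, β₀(k)) + λ·L₀(k); (ii) the permutation π : K ≃ K is such that L₁ := L₀ ∘ π assigns codelengths in the same order as −log₂ p₁, i.e., p₁(k₁) > p₁(k₂) implies L₁(k₁) ≤ L₁(k₂),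 where p₁(k) := P(α₁(X) = k); and (iii) the decoder β₁ : K → ℝⁿ satisfies the centroid condition for α₁, i.e., for every k and every x̂ ∈ ℝⁿ, E[d(X, β₁(k)) · 1{α₁(X) = k}] ≤ E[d(X, x̂) · 1{α₁(X) = k}]. Then the Lagrangian does not increase: E[d(X, β₁(α₁(X)))] + λ·E[L₁(α₁(X))] ≤ E[d(X, β₀(α₀(X)))] + λ·E[L₀(α₀(X))]. -/
/-!
Pass through the intermediate codec `(α₁, β₀, L₀)`. Replacing `β₀` by the
centroids `β₁` lowers the distortion cell by cell of the partition
`{α₁ ∘ X = k}`; relabelling the codelengths by `π` so that more probable cells get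
shorter codewords lowers the expected codelength by the rearrangement inequality;
and since `α₁` minimises `d + λ L₀` pointwise for `β₀`, it does at least as well
as `α₀`.
-/

open MeasureTheory ENNReal

section Fibers

variable {Ω K : Type*} [MeasurableSpace Ω] {μ : Measure Ω} {c : Ω → K}

theorem measurable_piecewise_fiber [Countable K] (hc : ∀ k, MeasurableSet {ω | c ω = k})
    {F : K → Ω → ℝ≥0∞} (hF : ∀ k, Measurable (F k)) : Measurable fun ω => F (c ω) ω := by
  let : MeasurableSpace K := ⊤
  exact (measurable_from_prod_countable_left (f := fun p : Ω × K => F p.2 p.1) hF).comp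
    (measurable_id.prodMk (measurable_to_countable' hc))

variable [Fintype K]

theorem lintegral_eq_sum_setLIntegral_fiber (hc : ∀ k, MeasurableSet {ω | c ω = k})
    (f : Ω → ℝ≥0∞) : ∫⁻ ω, f ω ∂μ = ∑ k, ∫⁻ ω in {ω | c ω = k}, f ω ∂μ := by
  rw [← tsum_fintype (L := .unconditional _), ← lintegral_iUnion hc (pairwise_disjoint_fiber c)]
  simp only [Set.iUnion_ofPred, exists_eq', Set.ofPred_true, Measure.restrict_univ]

theorem lintegral_piecewise_fiber (hc : ∀ k, MeasurableSet {ω | c ω = k}) (F : K → Ω → ℝ≥0∞) :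
    ∫⁻ ω, F (c ω) ω ∂μ = ∑ k, ∫⁻ ω in {ω | c ω = k}, F k ω ∂μ := by
  rw [lintegral_eq_sum_setLIntegral_fiber hc]
  refine Finset.sum_congr rfl fun k _ => setLIntegral_congr_fun (hc k) fun ω hω => ?_
  rw [show c ω = k from hω]

theorem lintegral_comp_eq_sum_mul_measure (hc : ∀ k, MeasurableSet {ω | c ω = k})
    (w : K → ℝ≥0∞) : ∫⁻ ω, w (c ω) ∂μ = ∑ k, w k * μ {ω | c ω = k} := by
  simp only [lintegral_piecewise_fiber hc fun k _ => w k, setLIntegral_const]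

theorem lintegral_piecewise_fiber_mono (hc : ∀ k, MeasurableSet {ω | c ω = k})
    {F G : K → Ω → ℝ≥0∞}
    (h : ∀ k, ∫⁻ ω in {ω | c ω = k}, F k ω ∂μ ≤ ∫⁻ ω in {ω | c ω = k}, G k ω ∂μ) :
    ∫⁻ ω, F (c ω) ω ∂μ ≤ ∫⁻ ω, G (c ω) ω ∂μ := by
  rw [lintegral_piecewise_fiber hc, lintegral_piecewise_fiber hc]
  exact Finset.sum_le_sum fun k _ => h k

theorem lintegral_natCast_comp_perm_le [IsFiniteMeasure μ]
    (hc : ∀ k, MeasurableSet {ω | c ω = k}) {L : K → ℕ} {π : Equiv.Perm K}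
    (h : Antivary (fun k => L (π k)) fun k => μ.real {ω | c ω = k}) :
    ∫⁻ ω, (L (π (c ω)) : ℝ≥0∞) ∂μ ≤ ∫⁻ ω, (L (c ω) : ℝ≥0∞) ∂μ := by
  have hexpect : ∀ M : K → ℕ, ∫⁻ ω, (M (c ω) : ℝ≥0∞) ∂μ
      = ENNReal.ofReal (∑ k, M k • μ.real {ω | c ω = k}) := by
    intro M
    rw [lintegral_comp_eq_sum_mul_measure hc (fun k => (M k : ℝ≥0∞)),
      ENNReal.ofReal_sum_of_nonneg fun k _ => by positivity]
    simp [nsmul_eq_mul, ENNReal.ofReal_mul, ofReal_measureReal]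
  rw [hexpect (fun k => L (π k)), hexpect L]
  refine ENNReal.ofReal_le_ofReal ?_
  calc ∑ k, L (π k) • μ.real {ω | c ω = k}
      ≤ ∑ k, L (π k) • μ.real {ω | c ω = π k} := h.sum_smul_le_sum_smul_comp_perm
    _ = ∑ k, L k • μ.real {ω | c ω = k} := Equiv.sum_comp π fun k => L k • μ.real {ω | c ω = k}

end Fibers

theorem lintegral_add_mul_le_of_forall_le {Ω : Type*} [MeasurableSpace Ω] {μ : Measure Ω}
    {f₁ g₁ f₀ g₀ : Ω → ℝ≥0∞} (hf₀ : Measurable f₀) {r : ℝ≥0∞} (hr : r ≠ ∞)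
    (h : ∀ ω, f₁ ω + r * g₁ ω ≤ f₀ ω + r * g₀ ω) :
    ∫⁻ ω, f₁ ω ∂μ + r * ∫⁻ ω, g₁ ω ∂μ ≤ ∫⁻ ω, f₀ ω ∂μ + r * ∫⁻ ω, g₀ ω ∂μ := by
  rw [← lintegral_const_mul' r _ hr, ← lintegral_const_mul' r _ hr, ← lintegral_add_left hf₀]
  exact (le_lintegral_add _ _).trans (lintegral_mono h)

theorem ccvq_iteration_nonincreasing_general {n : ℕ} {K : Type*} [Fintype K]
    {Ω : Type*} [MeasurableSpace Ω] (P : Measure Ω) [IsProbabilityMeasure P]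
    (X : Ω → (Fin n → ℝ)) (hX : Measurable X)
    (d : (Fin n → ℝ) × (Fin n → ℝ) → NNReal)
    (hd : ∀ xhat : Fin n → ℝ, Measurable fun x : Fin n → ℝ => d (x, xhat))
    (lam : NNReal)
    (α₀ : (Fin n → ℝ) → K)
    (hα₀meas : ∀ k : K, MeasurableSet {x : Fin n → ℝ | α₀ x = k})
    (β₀ : K → (Fin n → ℝ)) (L₀ : K → ℕ)
    (α₁ : (Fin n → ℝ) → K)
    (hα₁meas : ∀ k : K, MeasurableSet {x : Fin n → ℝ | α₁ x = k})
    (hopt : ∀ (x : Fin n → ℝ) (k : K),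
      (d (x, β₀ (α₁ x)) : ℝ≥0∞) + (lam : ℝ≥0∞) * (L₀ (α₁ x) : ℝ≥0∞)
        ≤ (d (x, β₀ k) : ℝ≥0∞) + (lam : ℝ≥0∞) * (L₀ k : ℝ≥0∞))
    (π : Equiv.Perm K) (L₁ : K → ℕ) (hL₁ : ∀ k, L₁ k = L₀ (π k))
    (p₁ : K → ℝ) (hp₁ : ∀ k, p₁ k = (P {ω | α₁ (X ω) = k}).toReal)
    (hsort : ∀ k₁ k₂ : K, p₁ k₁ > p₁ k₂ → L₁ k₁ ≤ L₁ k₂)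
    (β₁ : K → (Fin n → ℝ))
    (hcentroid : ∀ (k : K) (xhat : Fin n → ℝ),
      ∫⁻ ω in {ω | α₁ (X ω) = k}, (d (X ω, β₁ k) : ℝ≥0∞) ∂P
        ≤ ∫⁻ ω in {ω | α₁ (X ω) = k}, (d (X ω, xhat) : ℝ≥0∞) ∂P) :
    (∫⁻ ω, (d (X ω, β₁ (α₁ (X ω))) : ℝ≥0∞) ∂P)
        + (lam : ℝ≥0∞) * ∫⁻ ω, (L₁ (α₁ (X ω)) : ℝ≥0∞) ∂P
      ≤ (∫⁻ ω, (d (X ω, β₀ (α₀ (X ω))) : ℝ≥0∞) ∂P)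
        + (lam : ℝ≥0∞) * ∫⁻ ω, (L₀ (α₀ (X ω)) : ℝ≥0∞) ∂P := by
  obtain rfl : L₁ = fun k => L₀ (π k) := funext hL₁
  obtain rfl : p₁ = fun k => P.real {ω | α₁ (X ω) = k} := funext hp₁
  have hcell₀ : ∀ k, MeasurableSet {ω | α₀ (X ω) = k} := fun k => hX (hα₀meas k)
  have hcell₁ : ∀ k, MeasurableSet {ω | α₁ (X ω) = k} := fun k => hX (hα₁meas k)
  have hdecoder : ∫⁻ ω, (d (X ω, β₁ (α₁ (X ω))) : ℝ≥0∞) ∂P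
      ≤ ∫⁻ ω, (d (X ω, β₀ (α₁ (X ω))) : ℝ≥0∞) ∂P :=
    lintegral_piecewise_fiber_mono hcell₁ fun k => hcentroid k (β₀ k)
  have hcodelength : ∫⁻ ω, (L₀ (π (α₁ (X ω))) : ℝ≥0∞) ∂P
      ≤ ∫⁻ ω, (L₀ (α₁ (X ω)) : ℝ≥0∞) ∂P :=
    lintegral_natCast_comp_perm_le hcell₁ fun i j hij => hsort j i hij
  have hdist₀ : Measurable fun ω => (d (X ω, β₀ (α₀ (X ω))) : ℝ≥0∞) :=
    measurable_piecewise_fiber hcell₀ fun k => ((hd (β₀ k)).comp hX).coe_nnreal_ennreal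
  calc _ ≤ ∫⁻ ω, (d (X ω, β₀ (α₁ (X ω))) : ℝ≥0∞) ∂P
        + (lam : ℝ≥0∞) * ∫⁻ ω, (L₀ (α₁ (X ω)) : ℝ≥0∞) ∂P := by gcongr
    _ ≤ _ := lintegral_add_mul_le_of_forall_le hdist₀ coe_ne_top fun ω => hopt (X ω) (α₀ (X ω))

/-- **Monotone nonincrease of the Lagrangian in one iteration of the Codelength
Constrained Vector Quantization algorithm.**  Starting from `(α₀, β₀, L₀)`, suppose
(i) the encoder `α₁` is pointwise Lagrangian-optimal for `(β₀, L₀)`;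
(ii) the permutation `π` is such that `L₁ = L₀ ∘ π` assigns codelengths in the same
order as `-log₂ p₁`, where `p₁ k = P(α₁ (X) = k)`; and
(iii) the decoder `β₁` satisfies the centroid condition for `α₁`.
Then the Lagrangian does not increase:
`E[d(X, β₁(α₁(X)))] + λ·E[L₁(α₁(X))] ≤ E[d(X, β₀(α₀(X)))] + λ·E[L₀(α₀(X))]`. -/
theorem ccvq_iteration_nonincreasing {n : ℕ} {K : Type*} [Fintype K] [Nonempty K]
    {Ω : Type*} [MeasurableSpace Ω] (P : Measure Ω) [IsProbabilityMeasure P]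
    (X : Ω → (Fin n → ℝ)) (hX : Measurable X)
    (d : (Fin n → ℝ) × (Fin n → ℝ) → NNReal)
    (hd : ∀ xhat : Fin n → ℝ, Measurable fun x : Fin n → ℝ => d (x, xhat))
    (lam : NNReal)
    (α₀ : (Fin n → ℝ) → K)
    (hα₀meas : ∀ k : K, MeasurableSet {x : Fin n → ℝ | α₀ x = k})
    (β₀ : K → (Fin n → ℝ)) (L₀ : K → ℕ)
    (α₁ : (Fin n → ℝ) → K)
    (hα₁meas : ∀ k : K, MeasurableSet {x : Fin n → ℝ | α₁ x = k})
    (hopt : ∀ (x : Fin n → ℝ) (k : K),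
      (d (x, β₀ (α₁ x)) : ℝ≥0∞) + (lam : ℝ≥0∞) * (L₀ (α₁ x) : ℝ≥0∞)
        ≤ (d (x, β₀ k) : ℝ≥0∞) + (lam : ℝ≥0∞) * (L₀ k : ℝ≥0∞))
    (π : Equiv.Perm K) (L₁ : K → ℕ) (hL₁ : ∀ k, L₁ k = L₀ (π k))
    (p₁ : K → ℝ) (hp₁ : ∀ k, p₁ k = (P {ω | α₁ (X ω) = k}).toReal)
    (hsort : ∀ k₁ k₂ : K, p₁ k₁ > p₁ k₂ → L₁ k₁ ≤ L₁ k₂)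
    (β₁ : K → (Fin n → ℝ))
    (hcentroid : ∀ (k : K) (xhat : Fin n → ℝ),
      ∫⁻ ω in {ω | α₁ (X ω) = k}, (d (X ω, β₁ k) : ℝ≥0∞) ∂P
        ≤ ∫⁻ ω in {ω | α₁ (X ω) = k}, (d (X ω, xhat) : ℝ≥0∞) ∂P) :
    (∫⁻ ω, (d (X ω, β₁ (α₁ (X ω))) : ℝ≥0∞) ∂P)
        + (lam : ℝ≥0∞) * ∫⁻ ω, (L₁ (α₁ (X ω)) : ℝ≥0∞) ∂P
      ≤ (∫⁻ ω, (d (X ω, β₀ (α₀ (X ω))) : ℝ≥0∞) ∂P)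
        + (lam : ℝ≥0∞) * ∫⁻ ω, (L₀ (α₀ (X ω)) : ℝ≥0∞) ∂P :=
  ccvq_iteration_nonincreasing_general P X hX d hd lam α₀ hα₀meas β₀ L₀ α₁ hα₁meas hopt π L₁ hL₁ p₁
    hp₁ hsort β₁ hcentroid
end
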